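/- Let λ > 0 and for ℓ ∈ ℕ, ℓ ≥ 1, define Φ(ℓ) := √(w_λ(ℓ)) · ∫_0^∞ e^{−2u} u^{−λ−1} I_{λ+ℓ}(2u) du, where w_λ(ℓ) ≍ (ℓ+1)^{2λ} is the ultraspherical normalization weight. Then there exists C > 0, independent of ℓ, such that Φ(ℓ) ≤ C/(ℓ+1)^{λ+1}. -/

import Mathlib

/-
Expanding `I_{λ+ℓ}` in its power series and integrating term by term against `e^{-2u}` bounds
the integral by `∑ₖ Γ(ℓ+2k) / (2^{ℓ+2k} k! Γ(λ+ℓ+k+1))`. Legendre's duplication formula turns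
this into a hypergeometric series `₂F₁(ℓ/2, (ℓ+1)/2; λ+ℓ+1; 1)`, which Gauss's summation theorem
(a Beta integral against the binomial series) evaluates; duplicating back, the integral is at
most `const · Γ(ℓ) / Γ(ℓ+2λ+1)`. Log-convexity of `Γ` gives `Γ(ℓ) / Γ(ℓ+2λ+1) ≤ ℓ^{-2λ-1}`, and
`w_λ(ℓ) · Γ(ℓ) / Γ(ℓ+2λ+1) ≤ const / ℓ` is exact algebra; the geometric mean of the two bounds
is `const · ℓ^{-λ-1}`.
-/

open Real MeasureTheory

/-- Normalization weight `w_λ(n)`. -/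
noncomputable def wUltra (l : ℝ) (n : ℕ) : ℝ :=
  Real.Gamma l * (ascPochhammer ℝ n).eval (2 * l) * ((n : ℝ) + l) /
    (Real.sqrt π * Real.Gamma (l + 1 / 2) * (n.factorial : ℝ))

/-- The modified Bessel function of the first kind of order `ν`. -/
noncomputable def besselI (ν : ℝ) (z : ℝ) : ℝ :=
  ∑' k : ℕ, (z / 2) ^ (ν + 2 * (k : ℝ)) / ((k.factorial : ℝ) * Real.Gamma (ν + k + 1))

open Set
open scoped Nat

theorem Gamma_mul_ascPochhammer_eval {x : ℝ} (hx : 0 < x) (n : ℕ) :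
    Gamma x * (ascPochhammer ℝ n).eval x = Gamma (x + n) := by
  induction n with
  | zero => simp
  | succ n ih =>
    rw [ascPochhammer_succ_right, Polynomial.eval_mul, Nat.cast_succ, ← add_assoc,
      Gamma_add_one (by positivity), ← ih]
    simp only [Polynomial.eval_add, Polynomial.eval_X, Polynomial.eval_natCast]
    ring

theorem Gamma_add_one_mul_rpow_le {x a : ℝ} (hx : 0 < x) (ha : 0 ≤ a) :
    Gamma (x + 1) * x ^ a ≤ Gamma (x + 1 + a) := by
  rcases ha.eq_or_lt with rfl | ha
  · simp
  have hG : ∀ y, 0 < y → 0 < Gamma y := fun y hy => Gamma_pos_of_pos hy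
  -- `log ∘ Gamma` is convex and its slope on `[x, x + 1]` is `log x`
  have hslope := convexOn_log_Gamma.slope_mono_adjacent (x := x) (y := x + 1) (z := x + 1 + a)
    hx (by simp only [mem_Ioi]; linarith) (by linarith) (by linarith)
  simp only [Function.comp_apply, Gamma_add_one hx.ne', log_mul hx.ne' (hG x hx).ne',
    add_sub_cancel_left, div_one, le_div_iff₀ ha] at hslope
  rw [← log_le_log_iff (by positivity) (hG _ (by positivity)), log_mul (by positivity)
    (by positivity), log_rpow hx, Gamma_add_one hx.ne', log_mul hx.ne' (hG x hx).ne']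
  linarith

theorem Gamma_div_Gamma_add_one_add_le {x a : ℝ} (hx : 0 < x) (ha : 0 ≤ a) :
    Gamma x / Gamma (x + a + 1) ≤ 1 / x ^ (a + 1) := by
  have h := Gamma_add_one_mul_rpow_le hx ha
  rw [Gamma_add_one hx.ne', add_right_comm] at h
  rw [le_div_iff₀ (by positivity), div_mul_eq_mul_div,
    div_le_one (Gamma_pos_of_pos (by positivity)), rpow_add hx, rpow_one]
  linarith

theorem Gamma_mul_Gamma_add_half_eq_div_two_rpow (x : ℝ) :
    Gamma (x / 2) * Gamma (x / 2 + 1 / 2) = 2 * √π * (Gamma x / 2 ^ x) := by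
  rw [Gamma_mul_Gamma_add_half, mul_div_cancel₀ x two_ne_zero, rpow_sub two_pos, rpow_one]
  field_simp

theorem Gamma_add_div_factorial_eq_choose {a : ℝ} (ha : 0 < a) (k : ℕ) :
    Gamma (a + k) / k ! = Gamma a * Ring.choose (a + k - 1) k := by
  rw [← Gamma_mul_ascPochhammer_eval ha, ← Polynomial.ascPochhammer_smeval_eq_eval,
    ← Ring.factorial_nsmul_multichoose_eq_ascPochhammer, Ring.multichoose_eq, nsmul_eq_mul]
  field_simp

theorem hasSum_Gamma_add_div_factorial_mul_pow {a t : ℝ} (ha : 0 < a) (ht : |t| < 1) :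
    HasSum (fun k : ℕ => Gamma (a + k) / k ! * t ^ k) (Gamma a / (1 - t) ^ a) := by
  have h := (one_div_one_sub_rpow_hasFPowerSeriesOnBall_zero a).hasSum
    (y := t) (by simpa [edist_dist, Real.dist_eq, ENNReal.ofReal_lt_one] using ht)
  simp only [FormalMultilinearSeries.ofScalars_apply_eq, zero_add, smul_eq_mul] at h
  simp_rw [Gamma_add_div_factorial_eq_choose ha, mul_assoc, div_eq_mul_one_div (Gamma a)]
  exact h.mul_left _

theorem lintegral_ofReal_const_mul {α : Type*} [MeasurableSpace α] {μ : Measure α} {r : ℝ}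
    (hr : 0 ≤ r) (f : α → ℝ) :
    ∫⁻ x, ENNReal.ofReal (r * f x) ∂μ = ENNReal.ofReal r * ∫⁻ x, ENNReal.ofReal (f x) ∂μ := by
  simp_rw [ENNReal.ofReal_mul hr]
  exact lintegral_const_mul' _ _ ENNReal.ofReal_ne_top

theorem ofReal_tsum_le_tsum_ofReal {ι : Type*} {f : ι → ℝ} (hf : ∀ i, 0 ≤ f i) :
    ENNReal.ofReal (∑' i, f i) ≤ ∑' i, ENNReal.ofReal (f i) := by
  by_cases hs : Summable f
  · exact (ENNReal.ofReal_tsum_of_nonneg hf hs).le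
  · simp [tsum_eq_zero_of_not_summable hs]

theorem integral_le_of_lintegral_ofReal_le {α : Type*} [MeasurableSpace α] {μ : Measure α}
    {f : α → ℝ} {T : ℝ} (hf : 0 ≤ᵐ[μ] f) (hT : 0 ≤ T)
    (h : ∫⁻ x, ENNReal.ofReal (f x) ∂μ ≤ ENNReal.ofReal T) : ∫ x, f x ∂μ ≤ T := by
  rw [← ENNReal.ofReal_le_ofReal_iff hT]
  calc ENNReal.ofReal (∫ x, f x ∂μ) ≤ ‖∫ x, f x ∂μ‖ₑ := Real.ofReal_le_enorm _
    _ ≤ ∫⁻ x, ‖f x‖ₑ ∂μ := enorm_integral_le_lintegral_enorm f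
    _ = ∫⁻ x, ENNReal.ofReal (f x) ∂μ :=
        lintegral_congr_ae (hf.mono fun x hx => Real.enorm_of_nonneg hx)
    _ ≤ ENNReal.ofReal T := h

theorem lintegral_rpow_mul_exp_neg_mul {s r : ℝ} (hs : 0 < s) (hr : 0 < r) :
    ∫⁻ u in Ioi 0, ENNReal.ofReal (u ^ (s - 1) * exp (-(r * u)))
      = ENNReal.ofReal ((1 / r) ^ s * Gamma s) := by
  rw [← integral_rpow_mul_exp_neg_mul_Ioi hs hr, ofReal_integral_eq_lintegral_ofReal]
  · have h := integrableOn_rpow_mul_exp_neg_mul_rpow (s := s - 1) (by linarith) one_pos hr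
    simp only [rpow_one, neg_mul] at h
    exact h
  · exact ae_restrict_of_forall_mem measurableSet_Ioi fun u (hu : 0 < u) => by positivity

theorem lintegral_rpow_mul_one_sub_rpow {p q : ℝ} (hp : 0 < p) (hq : 0 < q) :
    ∫⁻ t in Ioo 0 1, ENNReal.ofReal (t ^ (p - 1) * (1 - t) ^ (q - 1))
      = ENNReal.ofReal (Gamma p * Gamma q / Gamma (p + q)) := by
  have h := ProbabilityTheory.lintegral_betaPDF_eq_one hp hq
  have hB := ProbabilityTheory.beta_pos hp hq
  simp_rw [ProbabilityTheory.lintegral_betaPDF, mul_assoc,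
    ENNReal.ofReal_mul (one_div_pos.2 hB).le] at h
  rw [lintegral_const_mul' _ _ ENNReal.ofReal_ne_top, one_div, ENNReal.ofReal_inv_of_pos hB] at h
  rw [← ProbabilityTheory.beta, ← inv_inv (ENNReal.ofReal _)]
  exact ENNReal.eq_inv_of_mul_eq_one_left ((mul_comm _ _).trans h)

/-- Gauss's summation theorem for `₂F₁(a, b; a + b + c; 1)`. -/
theorem tsum_ofReal_Gamma_mul_Gamma_div {a b c : ℝ} (ha : 0 < a) (hb : 0 < b) (hc : 0 < c) :
    ∑' k : ℕ, ENNReal.ofReal (Gamma (a + k) * Gamma (b + k) / (k ! * Gamma (a + b + c + k)))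
      = ENNReal.ofReal (Gamma a * Gamma b * Gamma c / (Gamma (a + c) * Gamma (b + c))) := by
  set F : ℕ → ℝ → ℝ := fun k t =>
    Gamma (a + k) / k ! / Gamma (a + c) * (t ^ (b + k - 1) * (1 - t) ^ (a + c - 1))
  have hterm : ∀ k : ℕ,
      ENNReal.ofReal (Gamma (a + k) * Gamma (b + k) / (k ! * Gamma (a + b + c + k)))
        = ∫⁻ t in Ioo 0 1, ENNReal.ofReal (F k t) := by
    intro k
    rw [lintegral_ofReal_const_mul (by positivity),
      lintegral_rpow_mul_one_sub_rpow (by positivity) (by positivity), ← ENNReal.ofReal_mul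
      (by positivity), show b + k + (a + c) = a + b + c + k by ring]
    congr 1
    field_simp
  have hsum : ∀ t ∈ Ioo (0 : ℝ) 1, ∑' k, ENNReal.ofReal (F k t)
      = ENNReal.ofReal (Gamma a / Gamma (a + c) * (t ^ (b - 1) * (1 - t) ^ (c - 1))) := by
    rintro t ⟨ht0, ht1⟩
    have h : HasSum (fun k => F k t)
        (Gamma a / Gamma (a + c) * (t ^ (b - 1) * (1 - t) ^ (c - 1))) := by
      have hF : (fun k => F k t) = fun k : ℕ =>
          t ^ (b - 1) * (1 - t) ^ (a + c - 1) / Gamma (a + c) * (Gamma (a + k) / k ! * t ^ k) := by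
        ext k
        simp only [F]
        rw [show b + k - 1 = b - 1 + k by ring, rpow_add ht0, rpow_natCast]
        ring
      have hval : Gamma a / Gamma (a + c) * (t ^ (b - 1) * (1 - t) ^ (c - 1))
          = t ^ (b - 1) * (1 - t) ^ (a + c - 1) / Gamma (a + c) * (Gamma a / (1 - t) ^ a) := by
        rw [show a + c - 1 = c - 1 + a by ring, rpow_add (by linarith)]
        field_simp
      rw [hF, hval]
      exact (hasSum_Gamma_add_div_factorial_mul_pow ha (abs_lt.2 ⟨by linarith, ht1⟩)).mul_left _
    rw [← ENNReal.ofReal_tsum_of_nonneg (fun k => by positivity) h.summable, h.tsum_eq]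
  calc ∑' k : ℕ, ENNReal.ofReal (Gamma (a + k) * Gamma (b + k) / (k ! * Gamma (a + b + c + k)))
      = ∫⁻ t in Ioo 0 1, ∑' k, ENNReal.ofReal (F k t) := by
        simp_rw [hterm]
        exact (lintegral_tsum fun k => by fun_prop).symm
    _ = ∫⁻ t in Ioo 0 1,
          ENNReal.ofReal (Gamma a / Gamma (a + c) * (t ^ (b - 1) * (1 - t) ^ (c - 1))) :=
        setLIntegral_congr_fun measurableSet_Ioo hsum
    _ = _ := by
        rw [lintegral_ofReal_const_mul (by positivity), lintegral_rpow_mul_one_sub_rpow hb hc,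
          ← ENNReal.ofReal_mul (by positivity)]
        congr 1
        ring

theorem tsum_ofReal_Gamma_div_two_rpow {l m : ℝ} (hl : -1 / 2 < l) (hm : 0 < m) :
    ∑' k : ℕ, ENNReal.ofReal (Gamma (m + 2 * k) / 2 ^ (m + 2 * k) / (k ! * Gamma (l + m + k + 1)))
      = ENNReal.ofReal
          (Gamma (l + 1 / 2) * 2 ^ (2 * l + 1) / (2 * √π) * (Gamma m / Gamma (m + 2 * l + 1))) := by
  have hdup := Gamma_mul_Gamma_add_half_eq_div_two_rpow
  have hterm : ∀ k : ℕ, Gamma (m + 2 * k) / 2 ^ (m + 2 * k) / (k ! * Gamma (l + m + k + 1))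
      = (2 * √π)⁻¹ * (Gamma (m / 2 + k) * Gamma ((m + 1) / 2 + k)
          / (k ! * Gamma (m / 2 + (m + 1) / 2 + (l + 1 / 2) + k))) := by
    intro k
    have h := hdup (m + 2 * k)
    rw [show (m + 2 * k) / 2 = m / 2 + k by ring,
      show m / 2 + k + 1 / 2 = (m + 1) / 2 + k by ring] at h
    rw [h, show m / 2 + (m + 1) / 2 + (l + 1 / 2) + k = l + m + k + 1 by ring]
    field_simp
  simp_rw [hterm, ENNReal.ofReal_mul (by positivity : (0 : ℝ) ≤ (2 * √π)⁻¹)]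
  rw [ENNReal.tsum_mul_left, tsum_ofReal_Gamma_mul_Gamma_div (by positivity) (by positivity)
    (by linarith), ← ENNReal.ofReal_mul (by positivity)]
  congr 1
  have h1 := hdup m
  have h2 := hdup (m + 2 * l + 1)
  rw [show m / 2 + 1 / 2 = (m + 1) / 2 by ring] at h1
  rw [show (m + 2 * l + 1) / 2 = m / 2 + (l + 1 / 2) by ring,
    show m / 2 + (l + 1 / 2) + 1 / 2 = (m + 1) / 2 + (l + 1 / 2) by ring] at h2
  rw [h1, h2, show m + 2 * l + 1 = m + (2 * l + 1) by ring, rpow_add two_pos]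
  field_simp

theorem besselI_nonneg {ν z : ℝ} (hν : -1 < ν) (hz : 0 ≤ z) : 0 ≤ besselI ν z :=
  tsum_nonneg fun k => div_nonneg (rpow_nonneg (by linarith) _)
    (mul_nonneg (by positivity) (Gamma_pos_of_pos (by linarith [k.cast_nonneg (α := ℝ)])).le)

theorem rpow_mul_besselI_two_mul {u : ℝ} (hu : 0 < u) (ν s : ℝ) :
    u ^ s * besselI ν (2 * u) = ∑' k : ℕ, u ^ (ν + s + 2 * k) / (k ! * Gamma (ν + k + 1)) := by
  rw [besselI, ← tsum_mul_left]
  congr 1 with k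
  rw [mul_div_cancel_left₀ u two_ne_zero, ← mul_div_assoc, ← rpow_add hu]
  ring_nf

theorem lintegral_exp_mul_rpow_mul_besselI_le {l m : ℝ} (hm : 0 < m) (hlm : -1 < l + m) :
    ∫⁻ u in Ioi 0, ENNReal.ofReal (exp (-2 * u) * u ^ (-l - 1) * besselI (l + m) (2 * u))
      ≤ ∑' k : ℕ, ENNReal.ofReal
          (Gamma (m + 2 * k) / 2 ^ (m + 2 * k) / (k ! * Gamma (l + m + k + 1))) := by
  set g : ℕ → ℝ → ℝ := fun k u =>
    (k ! * Gamma (l + m + k + 1))⁻¹ * (u ^ (m + 2 * k - 1) * exp (-(2 * u)))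
  have hD : ∀ k : ℕ, 0 < (k ! : ℝ) * Gamma (l + m + k + 1) := fun k =>
    mul_pos (by positivity) (Gamma_pos_of_pos (by linarith [k.cast_nonneg (α := ℝ)]))
  calc ∫⁻ u in Ioi 0, ENNReal.ofReal (exp (-2 * u) * u ^ (-l - 1) * besselI (l + m) (2 * u))
      ≤ ∫⁻ u in Ioi 0, ∑' k, ENNReal.ofReal (g k u) := by
        refine setLIntegral_mono' measurableSet_Ioi fun u (hu : 0 < u) => ?_
        rw [mul_assoc, rpow_mul_besselI_two_mul hu, ← tsum_mul_left]
        refine (ofReal_tsum_le_tsum_ofReal fun k => ?_).trans_eq (tsum_congr fun k => ?_)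
        · have := hD k
          positivity
        · congr 1
          simp only [g]
          rw [show l + m + (-l - 1) + 2 * k = m + 2 * k - 1 by ring, neg_mul]
          field_simp
    _ = ∑' k, ∫⁻ u in Ioi 0, ENNReal.ofReal (g k u) := lintegral_tsum fun k => by fun_prop
    _ = _ := by
        congr 1 with k
        rw [lintegral_ofReal_const_mul (inv_pos.2 (hD k)).le,
          lintegral_rpow_mul_exp_neg_mul (by positivity) two_pos, ← ENNReal.ofReal_mul
          (inv_pos.2 (hD k)).le, div_rpow zero_le_one zero_le_two, one_rpow]
        congr 1
        field_simp

theorem integral_exp_mul_rpow_mul_besselI_le {l m : ℝ} (hl : -1 / 2 < l) (hm : 0 < m) :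
    ∫ u in Ioi 0, exp (-2 * u) * u ^ (-l - 1) * besselI (l + m) (2 * u)
      ≤ Gamma (l + 1 / 2) * 2 ^ (2 * l + 1) / (2 * √π) * (Gamma m / Gamma (m + 2 * l + 1)) := by
  refine integral_le_of_lintegral_ofReal_le ?_ ?_ ?_
  · exact ae_restrict_of_forall_mem measurableSet_Ioi fun u (hu : 0 < u) =>
      mul_nonneg (by positivity) (besselI_nonneg (by linarith) (by positivity))
  · have := Gamma_pos_of_pos (show 0 < l + 1 / 2 by linarith)
    have := Gamma_pos_of_pos (show 0 < m + 2 * l + 1 by linarith)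
    positivity
  · exact (lintegral_exp_mul_rpow_mul_besselI_le hm (by linarith)).trans_eq
      (tsum_ofReal_Gamma_div_two_rpow hl hm)

theorem wUltra_mul_Gamma_div_le {l : ℝ} (hl : 0 < l) {m : ℕ} (hm : 0 < m) :
    wUltra l m * (Gamma m / Gamma (m + 2 * l + 1))
      ≤ Gamma l / (√π * Gamma (l + 1 / 2) * Gamma (2 * l)) / m := by
  have hm' : (0 : ℝ) < m := Nat.cast_pos.2 hm
  have hpoch : (ascPochhammer ℝ m).eval (2 * l) = Gamma (m + 2 * l) / Gamma (2 * l) := by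
    rw [eq_div_iff (Gamma_pos_of_pos (by positivity)).ne', mul_comm,
      Gamma_mul_ascPochhammer_eval (by positivity), add_comm]
  have hfact : (m ! : ℝ) = m * Gamma m := by
    rw [← Gamma_nat_eq_factorial, Gamma_add_one hm'.ne']
  have hG : Gamma (m + 2 * l + 1) = (m + 2 * l) * Gamma (m + 2 * l) :=
    Gamma_add_one (by positivity)
  have hw : wUltra l m * (Gamma m / Gamma (m + 2 * l + 1))
      = Gamma l / (√π * Gamma (l + 1 / 2) * Gamma (2 * l)) / m * ((m + l) / (m + 2 * l)) := by
    have := Gamma_pos_of_pos hm'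
    have := Gamma_pos_of_pos (show 0 < (m : ℝ) + 2 * l by positivity)
    rw [wUltra, hpoch, hfact, hG]
    field_simp
  rw [hw]
  exact mul_le_of_le_one_right (by positivity) ((div_le_one (by positivity)).2 (by linarith))

theorem sqrt_wUltra_mul_Gamma_div_le {l : ℝ} (hl : 0 < l) {m : ℕ} (hm : 1 ≤ m) :
    √(wUltra l m) * (Gamma m / Gamma (m + 2 * l + 1))
      ≤ √(Gamma l / (√π * Gamma (l + 1 / 2) * Gamma (2 * l))) * 2 ^ (l + 1)
          / (m + 1) ^ (l + 1) := by
  set K := Gamma l / (√π * Gamma (l + 1 / 2) * Gamma (2 * l))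
  set R := Gamma m / Gamma (m + 2 * l + 1)
  have hm' : (0 : ℝ) < m := Nat.cast_pos.2 hm
  have hR : R ≤ 1 / m ^ (2 * l + 1) := Gamma_div_Gamma_add_one_add_le hm' (by positivity)
  calc √(wUltra l m) * R = √(wUltra l m * R * R) := by
        rw [mul_assoc, sqrt_mul' _ (mul_self_nonneg R), sqrt_mul_self (by positivity)]
    _ ≤ √(K / m * (1 / m ^ (2 * l + 1))) := by
        gcongr
        exact wUltra_mul_Gamma_div_le hl hm
    _ = √K / m ^ (l + 1) := by
        rw [div_mul_div_comm, mul_one, show (m : ℝ) * m ^ (2 * l + 1) = (m ^ (l + 1)) ^ 2 by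
          rw [sq, ← rpow_add hm', ← rpow_one_add' hm'.le (by linarith)]
          ring_nf, sqrt_div' _ (sq_nonneg _), sqrt_sq (by positivity)]
    _ ≤ √K * 2 ^ (l + 1) / (m + 1) ^ (l + 1) := by
        rw [div_le_div_iff₀ (by positivity) (by positivity), mul_assoc,
          ← mul_rpow zero_le_two hm'.le]
        gcongr
        linarith [(Nat.one_le_cast (α := ℝ)).2 hm]

theorem poisson_kernel_bound (l : ℝ) (hl : 0 < l) :
    ∃ C : ℝ, 0 < C ∧ ∀ m : ℕ, 1 ≤ m →
      Real.sqrt (wUltra l m) *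
          ∫ u in Set.Ioi (0 : ℝ), Real.exp (-2 * u) * u ^ (-l - 1) * besselI (l + m) (2 * u)
        ≤ C / ((m : ℝ) + 1) ^ (l + 1) := by
  set A := Gamma (l + 1 / 2) * 2 ^ (2 * l + 1) / (2 * √π)
  set B := √(Gamma l / (√π * Gamma (l + 1 / 2) * Gamma (2 * l))) * 2 ^ (l + 1)
  refine ⟨A * B, by positivity, fun m hm => ?_⟩
  calc √(wUltra l m) * ∫ u in Ioi 0, exp (-2 * u) * u ^ (-l - 1) * besselI (l + m) (2 * u)
      ≤ √(wUltra l m) * (A * (Gamma m / Gamma (m + 2 * l + 1))) :=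
        mul_le_mul_of_nonneg_left
          (integral_exp_mul_rpow_mul_besselI_le (by linarith) (Nat.cast_pos.2 hm)) (sqrt_nonneg _)
    _ = A * (√(wUltra l m) * (Gamma m / Gamma (m + 2 * l + 1))) := by ring
    _ ≤ A * (B / (m + 1) ^ (l + 1)) := by
        gcongr
        exact sqrt_wUltra_mul_Gamma_div_le hl hm
    _ = A * B / (m + 1) ^ (l + 1) := by ring
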